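/- If Ψ, Ψ' : X → ℝ^d are two functions whose Birkhoff sums differ by a uniformly bounded amount, i.e. there exists K ≥ 0 such that ‖Ψⁿ(p) − Ψ'ⁿ(p)‖ ≤ K for every p ∈ X and every n ≥ 1, then the Misiurewicz–Ziemian rotation sets coincide: ρ(f,Ψ) = ρ(f,Ψ'). -/

import Mathlib

open Filter Topology

/-- Birkhoff sums of an observable `Ψ` along iterates of `f`. -/
noncomputable def mzBirkhoffSum {X : Type*} {d : ℕ} (f : X → X)
    (Ψ : X → EuclideanSpace ℝ (Fin d)) (n : ℕ) (p : X) : EuclideanSpace ℝ (Fin d) :=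
  ∑ k ∈ Finset.range n, Ψ (f^[k] p)

/-- The Misiurewicz–Ziemian rotation set of the pair `(f, Ψ)`:
`⋂_{m ≥ 1} closure (⋃_{n ≥ m} { Ψⁿ(p)/n : p ∈ X })`. -/
noncomputable def rotSet {X : Type*} {d : ℕ} (f : X → X)
    (Ψ : X → EuclideanSpace ℝ (Fin d)) : Set (EuclideanSpace ℝ (Fin d)) :=
  ⋂ (m : ℕ) (_ : 1 ≤ m), closure (⋃ (n : ℕ) (_ : m ≤ n),
    {v : EuclideanSpace ℝ (Fin d) | ∃ p : X, v = (n : ℝ)⁻¹ • mzBirkhoffSum f Ψ n p})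

lemma rotSet_subset_of_birkhoff_dist_bounded
    {X : Type*} {d : ℕ}
    (f : X → X) (Ψ Ψ' : X → EuclideanSpace ℝ (Fin d))
    (K : ℝ) (hK : 0 ≤ K)
    (h : ∀ p : X, ∀ n : ℕ, 1 ≤ n →
      ‖mzBirkhoffSum f Ψ n p - mzBirkhoffSum f Ψ' n p‖ ≤ K) :
    rotSet f Ψ ⊆ rotSet f Ψ' := by
  intro x hx
  simp only [rotSet, Set.mem_iInter] at hx ⊢
  intro m hm
  rw [Metric.mem_closure_iff]
  intro ε hε
  set N : ℕ := max m (⌈2 * K / ε⌉₊ + 1) with hN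
  have hNm : m ≤ N := le_max_left _ _
  have hN1 : 1 ≤ N := le_trans hm hNm
  have hclos := hx N hN1
  rw [Metric.mem_closure_iff] at hclos
  obtain ⟨b, hb, hdb⟩ := hclos (ε / 2) (by linarith)
  simp only [Set.mem_iUnion, Set.mem_setOf_eq] at hb
  obtain ⟨n, hnN, p, rfl⟩ := hb
  have hn1 : 1 ≤ n := le_trans hN1 hnN
  have hnpos : (0:ℝ) < n := by exact_mod_cast hn1
  refine ⟨(n : ℝ)⁻¹ • mzBirkhoffSum f Ψ' n p, ?_, ?_⟩
  · exact Set.mem_iUnion.2 ⟨n, Set.mem_iUnion.2 ⟨le_trans hNm hnN, ⟨p, rfl⟩⟩⟩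
  · have hgt : 2 * K / ε < (n : ℝ) := by
      have : (⌈2 * K / ε⌉₊ + 1 : ℕ) ≤ n := le_trans (le_max_right _ _) hnN
      have h2 : 2 * K / ε ≤ (⌈2 * K / ε⌉₊ : ℝ) := Nat.le_ceil _
      have h3 : ((⌈2 * K / ε⌉₊ + 1 : ℕ) : ℝ) ≤ (n : ℝ) := by exact_mod_cast this
      push_cast at h3
      linarith
    have hbb' : dist ((n : ℝ)⁻¹ • mzBirkhoffSum f Ψ n p)
        ((n : ℝ)⁻¹ • mzBirkhoffSum f Ψ' n p) < ε / 2 := by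
      rw [dist_eq_norm, ← smul_sub, norm_smul]
      have hb := h p n hn1
      have hnorm : ‖(n : ℝ)⁻¹‖ = (n : ℝ)⁻¹ := by
        rw [Real.norm_eq_abs, abs_of_pos (inv_pos.2 hnpos)]
      rw [hnorm]
      have : (n : ℝ)⁻¹ * ‖mzBirkhoffSum f Ψ n p - mzBirkhoffSum f Ψ' n p‖
          ≤ (n : ℝ)⁻¹ * K :=
        mul_le_mul_of_nonneg_left hb (le_of_lt (inv_pos.2 hnpos))
      have hKn : (n : ℝ)⁻¹ * K < ε / 2 := by
        rw [inv_mul_lt_iff₀ hnpos]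
        have : 2 * K / ε * (ε / 2) = K := by field_simp
        nlinarith [mul_lt_mul_of_pos_right hgt (show (0:ℝ) < ε / 2 by linarith)]
      linarith
    calc dist x ((n : ℝ)⁻¹ • mzBirkhoffSum f Ψ' n p)
        ≤ dist x ((n : ℝ)⁻¹ • mzBirkhoffSum f Ψ n p)
          + dist ((n : ℝ)⁻¹ • mzBirkhoffSum f Ψ n p)
            ((n : ℝ)⁻¹ • mzBirkhoffSum f Ψ' n p) := dist_triangle _ _ _
      _ < ε := by linarith

/-- If the Birkhoff sums of `Ψ` and `Ψ'` differ by a uniformly bounded amount,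
then the Misiurewicz–Ziemian rotation sets coincide. -/
theorem rotSet_eq_of_birkhoff_dist_bounded
    {X : Type*} {d : ℕ} (hd : 1 ≤ d)
    (f : X → X) (Ψ Ψ' : X → EuclideanSpace ℝ (Fin d))
    (K : ℝ) (hK : 0 ≤ K)
    (h : ∀ p : X, ∀ n : ℕ, 1 ≤ n →
      ‖mzBirkhoffSum f Ψ n p - mzBirkhoffSum f Ψ' n p‖ ≤ K) :
    rotSet f Ψ = rotSet f Ψ' := by
  apply le_antisymm
  · exact rotSet_subset_of_birkhoff_dist_bounded f Ψ Ψ' K hK h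
  · exact rotSet_subset_of_birkhoff_dist_bounded f Ψ' Ψ K hK
      fun p n hn => by rw [norm_sub_rev]; exact h p n hn
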